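/- Every nonzero element of the subgroup of (ℤ/9ℤ)⁴ generated by (0,0,1,6), (0,1,1,1), and (1,0,0,2) has Mannheim weight at least 3, and this bound is attained; hence the minimum Mannheim distance of this code is 3. -/

import Mathlib

/-- Mannheim weight on (ℤ/9ℤ)⁴, using representatives in {-4,…,4}. -/
def wt (v : Fin 4 → ZMod 9) : ℤ := ∑ i, |(v i).valMinAbs|

def C : AddSubgroup (Fin 4 → ZMod 9) :=
  AddSubgroup.closure {![0,0,1,6], ![0,1,1,1], ![1,0,0,2]}

/-!
The code lies in the kernel of the parity check `v ↦ v₃ - 2v₀ - 4v₁ - 6v₂`. Lift a word `v` to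
its representatives `aᵢ ∈ [-4, 4]`: the parity check says that `9 ∣ a₃ - 2a₀ - 4a₁ - 6a₂`, and a
nonzero word of weight `∑ |aᵢ| ≤ 2` cannot satisfy this, which is a linear integer problem.
-/

def parityCheck : (Fin 4 → ZMod 9) →+ ZMod 9 :=
  AddMonoidHom.mk' (fun v => v 3 - 2 * v 0 - 4 * v 1 - 6 * v 2) fun v w => by
    simp only [Pi.add_apply]; ring

theorem C_le_ker_parityCheck : C ≤ parityCheck.ker := by
  rw [C, AddSubgroup.closure_le]
  simp only [Set.insert_subset_iff, Set.singleton_subset_iff, SetLike.mem_coe,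
    AddMonoidHom.mem_ker]
  decide

theorem three_le_wt_of_parityCheck_eq_zero {v : Fin 4 → ZMod 9} (hv : parityCheck v = 0)
    (hv₀ : v ≠ 0) : 3 ≤ wt v := by
  set a : Fin 4 → ℤ := fun i => (v i).valMinAbs with ha
  have hdvd : ((9 : ℕ) : ℤ) ∣ a 3 - 2 * a 0 - 4 * a 1 - 6 * a 2 := by
    rw [← ZMod.intCast_zmod_eq_zero_iff_dvd]
    push_cast [ha, ZMod.coe_valMinAbs]
    exact hv
  have hsupp : a 0 ≠ 0 ∨ a 1 ≠ 0 ∨ a 2 ≠ 0 ∨ a 3 ≠ 0 := by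
    obtain ⟨i, hi⟩ := Function.ne_iff.mp hv₀
    fin_cases i <;> simp_all [ZMod.valMinAbs_eq_zero]
  rw [wt, Fin.sum_univ_four]
  by_contra! hlt
  rcases abs_cases (a 0) with h0 | h0 <;> rcases abs_cases (a 1) with h1 | h1 <;>
    rcases abs_cases (a 2) with h2 | h2 <;> rcases abs_cases (a 3) with h3 | h3 <;> lia

theorem min_mannheim_distance_eq_three :
    (∀ v ∈ C, v ≠ 0 → 3 ≤ wt v) ∧ (∃ v ∈ C, v ≠ 0 ∧ wt v = 3) := by
  refine ⟨fun v hv hv₀ => three_le_wt_of_parityCheck_eq_zero (C_le_ker_parityCheck hv) hv₀,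
    ![0,1,1,1], AddSubgroup.subset_closure (by simp), by decide, by decide⟩
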